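/- arXiv:0801.0980 — 4 statements merged into one kernel-verified Lean document; each statement's English description precedes it below -/
import Mathlib

section
/- Let T be an upper transition operator on a finite state set X, h a function on X, and suppose there exists x ∈ X and n_x ∈ ℕ with min(T^{n_x} 1_{x}) > 0. Then (Tⁿh)(x) - min(Tⁿh) → 0 as n → ∞, so (Tⁿh)(x) converges to l(h) = lim min(Tⁿh). -/
open Finset Filter

noncomputable def finf {X : Type*} [Fintype X] [Nonempty X] (g : X → ℝ) : ℝ :=
  Finset.univ.inf' Finset.univ_nonempty g

noncomputable def fsup {X : Type*} [Fintype X] [Nonempty X] (g : X → ℝ) : ℝ :=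
  Finset.univ.sup' Finset.univ_nonempty g

def IsUpperExpectation {X : Type*} [Fintype X] [Nonempty X] (U : (X → ℝ) → ℝ) : Prop :=
  (∀ g : X → ℝ, finf g ≤ U g ∧ U g ≤ fsup g) ∧
  (∀ g₁ g₂ : X → ℝ, U (g₁ + g₂) ≤ U g₁ + U g₂) ∧
  (∀ (l : ℝ), 0 ≤ l → ∀ g : X → ℝ, U (l • g) = l * U g)

def IsUpperTransition {X : Type*} [Fintype X] [Nonempty X] (T : (X → ℝ) → (X → ℝ)) : Prop :=
  ∀ x : X, IsUpperExpectation (fun h => T h x)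

def ind {X : Type*} [DecidableEq X] (y : X) : X → ℝ := fun z => if z = y then 1 else 0

section Aux

variable {X : Type*} [Fintype X] [Nonempty X]

lemma finf_le' (g : X → ℝ) (z : X) : finf g ≤ g z :=
  Finset.inf'_le _ (Finset.mem_univ z)

lemma ue_mono {U : (X → ℝ) → ℝ} (hU : IsUpperExpectation U) {g₁ g₂ : X → ℝ}
    (hg : ∀ z, g₁ z ≤ g₂ z) : U g₁ ≤ U g₂ := by
  have h1 := hU.2.1 g₂ (g₁ - g₂)
  have he : g₂ + (g₁ - g₂) = g₁ := by ring
  rw [he] at h1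
  have h2 : U (g₁ - g₂) ≤ fsup (g₁ - g₂) := (hU.1 _).2
  have h3 : fsup (g₁ - g₂) ≤ 0 :=
    Finset.sup'_le _ _ fun z _ => by simpa [sub_nonpos] using hg z
  linarith

lemma ue_const {U : (X → ℝ) → ℝ} (hU : IsUpperExpectation U) (c : ℝ) :
    U (fun _ => c) = c := by
  have h1 : finf (fun _ : X => c) ≤ U (fun _ => c) := (hU.1 _).1
  have h2 : U (fun _ => c) ≤ fsup (fun _ : X => c) := (hU.1 _).2
  simp only [finf, fsup, Finset.inf'_const, Finset.sup'_const] at h1 h2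
  linarith

lemma ue_shift {U : (X → ℝ) → ℝ} (hU : IsUpperExpectation U) (g : X → ℝ) (c : ℝ) :
    U (fun z => g z + c) = U g + c := by
  have h1 := hU.2.1 g (fun _ => c)
  have h2 := hU.2.1 (fun z => g z + c) (fun _ => -c)
  have e1 : g + (fun _ => c) = fun z => g z + c := rfl
  have e2 : (fun z => g z + c) + (fun _ => -c) = g := by funext z; simp
  rw [e1, ue_const hU] at h1
  rw [e2, ue_const hU] at h2
  linarith

lemma T_iter_mono {T : (X → ℝ) → (X → ℝ)} (hT : IsUpperTransition T) (k : ℕ)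
    {g₁ g₂ : X → ℝ} (hg : ∀ z, g₁ z ≤ g₂ z) : ∀ z, T^[k] g₁ z ≤ T^[k] g₂ z := by
  induction k with
  | zero => exact hg
  | succ k ih =>
    intro z
    rw [Function.iterate_succ_apply', Function.iterate_succ_apply']
    exact ue_mono (hT z) ih

lemma T_affine {T : (X → ℝ) → (X → ℝ)} (hT : IsUpperTransition T)
    (f : X → ℝ) (m d : ℝ) (hd : 0 ≤ d) (k : ℕ) :
    T^[k] (fun z => d * f z + m) = fun z => d * T^[k] f z + m := by
  induction k with
  | zero => simp
  | succ k ih =>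
    rw [Function.iterate_succ_apply', Function.iterate_succ_apply', ih]
    funext z
    have hs := ue_shift (hT z) (fun w => d * T^[k] f w) m
    have hh := (hT z).2.2 d hd (T^[k] f)
    have e : (fun w => d * T^[k] f w) = d • T^[k] f := rfl
    rw [hs, e]
    exact congrArg (· + m) hh

end Aux

theorem upper_transition_converge_at_regular_state {X : Type*} [Fintype X] [Nonempty X]
    [DecidableEq X]
    (T : (X → ℝ) → (X → ℝ)) (hT : IsUpperTransition T) (h : X → ℝ)
    (x : X) (nx : ℕ) (hx : 0 < finf (T^[nx] (ind x)))
    (l : ℝ) (hl : Tendsto (fun n => finf (T^[n] h)) atTop (nhds l)) :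
    Tendsto (fun n => T^[n] h x - finf (T^[n] h)) atTop (nhds 0) ∧
    Tendsto (fun n => T^[n] h x) atTop (nhds l) := by
  set ε := finf (T^[nx] (ind x)) with hε
  set m : ℕ → ℝ := fun n => finf (T^[n] h) with hm
  set d : ℕ → ℝ := fun n => T^[n] h x - m n with hd
  have hd0 : ∀ n, 0 ≤ d n := fun n => sub_nonneg.2 (finf_le' _ x)
  -- key inequality
  have hkey : ∀ n, m n + d n * ε ≤ m (n + nx) := by
    intro n
    have lower : ∀ w, d n * ind x w + m n ≤ T^[n] h w := by
      intro w
      by_cases hw : w = x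
      · subst hw; simp [ind, hd]
      · simp only [ind, if_neg hw, mul_zero, zero_add]
        exact finf_le' _ w
    have mono := T_iter_mono hT nx lower
    have aff := T_affine hT (ind x) (m n) (d n) (hd0 n) nx
    apply Finset.le_inf'
    intro z _
    have h1 : d n * T^[nx] (ind x) z + m n ≤ T^[nx] (T^[n] h) z := by
      have := mono z
      rwa [aff] at this
    have h2 : d n * ε ≤ d n * T^[nx] (ind x) z :=
      mul_le_mul_of_nonneg_left (finf_le' _ z) (hd0 n)
    have h3 : T^[nx] (T^[n] h) z = T^[n + nx] h z := by
      rw [add_comm, Function.iterate_add_apply]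
    linarith
  -- squeeze
  have hup : ∀ n, d n ≤ (m (n + nx) - m n) / ε := by
    intro n
    rw [le_div_iff₀ hx]
    linarith [hkey n]
  have hshift : Tendsto (fun n => m (n + nx)) atTop (nhds l) :=
    hl.comp (tendsto_add_atTop_nat nx)
  have hg : Tendsto (fun n => (m (n + nx) - m n) / ε) atTop (nhds 0) := by
    have := (hshift.sub hl).div_const ε
    simpa using this
  have part1 : Tendsto d atTop (nhds 0) := squeeze_zero hd0 hup hg
  refine ⟨part1, ?_⟩
  have : Tendsto (fun n => d n + m n) atTop (nhds (0 + l)) := part1.add hl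
  simpa [hd] using this
end

section
/- For an abstract accessibility relation on a finite set X, the relation is top class regular if and only if the set R = {x ∈ X : ∃n ∈ ℕ, ∀k ≥ n, ∀y ∈ X, y →ₖ x} is nonempty; and in that case R equals the unique maximal communication class. -/
section

variable {X : Type*}

def AccStar (acc : ℕ → X → X → Prop) (x y : X) : Prop := ∃ n, acc n x y

def IsMaximalState (acc : ℕ → X → X → Prop) (x : X) : Prop :=
  ∀ y, AccStar acc x y → AccStar acc y x

def IsCommClass (acc : ℕ → X → X → Prop) (D : Set X) : Prop :=
  ∃ x, D = {y | AccStar acc x y ∧ AccStar acc y x}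

def IsRegularClass (acc : ℕ → X → X → Prop) (D : Set X) : Prop :=
  ∃ n, ∀ k ≥ n, ∀ x ∈ D, ∀ y ∈ D, acc k x y

/-- There is a unique maximal communication class, and it is regular. -/
def TopClassRegular (acc : ℕ → X → X → Prop) : Prop :=
  ∃ D : Set X, IsCommClass acc D ∧ (∀ x ∈ D, IsMaximalState acc x) ∧ IsRegularClass acc D ∧
    ∀ D' : Set X, IsCommClass acc D' → (∀ x ∈ D', IsMaximalState acc x) → D' = D

lemma accStar_refl {acc : ℕ → X → X → Prop} (h0 : ∀ x y : X, acc 0 x y ↔ x = y) (x : X) :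
    AccStar acc x x := ⟨0, (h0 x x).2 rfl⟩

lemma accStar_trans {acc : ℕ → X → X → Prop}
    (htrans : ∀ (n m : ℕ) (x y z : X), acc n x y → acc m y z → acc (n + m) x z)
    {x y z : X} (h1 : AccStar acc x y) (h2 : AccStar acc y z) : AccStar acc x z := by
  obtain ⟨n, hn⟩ := h1
  obtain ⟨m, hm⟩ := h2
  exact ⟨n + m, htrans n m x y z hn hm⟩

lemma exists_maximal_reachable [Fintype X] {acc : ℕ → X → X → Prop}
    (h0 : ∀ x y : X, acc 0 x y ↔ x = y)
    (htrans : ∀ (n m : ℕ) (x y z : X), acc n x y → acc m y z → acc (n + m) x z)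
    (y : X) : ∃ z, AccStar acc y z ∧ IsMaximalState acc z := by
  classical
  set f : X → ℕ := fun z => (Finset.univ.filter (fun u => AccStar acc z u)).card with hf
  have hSne : (Finset.univ.filter (fun z => AccStar acc y z)).Nonempty :=
    ⟨y, by simp [accStar_refl h0 y]⟩
  obtain ⟨z, hz, hzmin⟩ := Finset.exists_min_image _ f hSne
  simp only [Finset.mem_filter, Finset.mem_univ, true_and] at hz
  refine ⟨z, hz, ?_⟩
  intro u hzu
  by_contra huz
  have hu : u ∈ Finset.univ.filter (fun z => AccStar acc y z) := by
    simp only [Finset.mem_filter, Finset.mem_univ, true_and]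
    exact accStar_trans htrans hz hzu
  have hle := hzmin u hu
  have hsub : (Finset.univ.filter (fun v => AccStar acc u v)) ⊂
      (Finset.univ.filter (fun v => AccStar acc z v)) := by
    constructor
    · intro v hv
      simp only [Finset.mem_filter, Finset.mem_univ, true_and] at hv ⊢
      exact accStar_trans htrans hzu hv
    · intro hcon
      have : z ∈ Finset.univ.filter (fun v => AccStar acc u v) := by
        apply hcon
        simp [accStar_refl h0 z]
      simp only [Finset.mem_filter, Finset.mem_univ, true_and] at this
      exact huz this
  have hlt := Finset.card_lt_card hsub
  simp only [hf] at hle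
  omega

theorem top_class_regular_characterisation {X : Type*} [Fintype X] [Nonempty X]
    (acc : ℕ → X → X → Prop)
    (h0 : ∀ x y : X, acc 0 x y ↔ x = y)
    (htrans : ∀ (n m : ℕ) (x y z : X), acc n x y → acc m y z → acc (n + m) x z)
    (hstep : ∀ (x : X) (n : ℕ), ∃ y : X, acc n x y) :
    (TopClassRegular acc ↔
        ({x : X | ∃ n : ℕ, ∀ k ≥ n, ∀ y : X, acc k y x} : Set X).Nonempty) ∧
    (TopClassRegular acc →
      ∀ D : Set X, IsCommClass acc D → (∀ x ∈ D, IsMaximalState acc x) →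
        D = {x : X | ∃ n : ℕ, ∀ k ≥ n, ∀ y : X, acc k y x}) := by
  classical
  set R : Set X := {x : X | ∃ n : ℕ, ∀ k ≥ n, ∀ y : X, acc k y x} with hRdef
  -- Lemma A: if x₀ ∈ R then R is the communication class of x₀.
  have hA : ∀ x₀ ∈ R, R = {y | AccStar acc x₀ y ∧ AccStar acc y x₀} := by
    intro x₀ hx₀
    obtain ⟨n₀, hn₀⟩ := hx₀
    ext y
    constructor
    · rintro ⟨m, hm⟩
      exact ⟨⟨m, hm m le_rfl x₀⟩, ⟨n₀, hn₀ n₀ le_rfl y⟩⟩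
    · rintro ⟨⟨m, hmy⟩, -⟩
      refine ⟨n₀ + m, fun k hk z => ?_⟩
      have h1 : acc (k - m) z x₀ := hn₀ (k - m) (by omega) z
      have := htrans (k - m) m z x₀ y h1 hmy
      have hkm : k - m + m = k := by omega
      rwa [hkm] at this
  -- all elements of the communication class of an x₀ ∈ R are maximal
  have hAmax : ∀ x₀ ∈ R, ∀ x ∈ ({y | AccStar acc x₀ y ∧ AccStar acc y x₀} : Set X),
      IsMaximalState acc x := by
    rintro x₀ ⟨n₀, hn₀⟩ x ⟨hx1, hx2⟩ y hxy
    exact accStar_trans htrans ⟨n₀, hn₀ n₀ le_rfl y⟩ hx1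
  -- Direction B: R nonempty → TopClassRegular
  have hB : R.Nonempty → TopClassRegular acc := by
    rintro ⟨x₀, hx₀⟩
    set D : Set X := {y | AccStar acc x₀ y ∧ AccStar acc y x₀} with hDdef
    have hDR : R = D := hA x₀ hx₀
    refine ⟨D, ⟨x₀, rfl⟩, hAmax x₀ hx₀, ?_, ?_⟩
    · -- regularity
      have hbd : ∀ b : X, ∃ m, b ∈ R → ∀ k ≥ m, ∀ y, acc k y b := by
        intro b
        by_cases hb : b ∈ R
        · exact ⟨hb.choose, fun _ => hb.choose_spec⟩
        · exact ⟨0, fun h => absurd h hb⟩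
      choose f hf using hbd
      refine ⟨Finset.univ.sup f, fun k hk a ha b hb => ?_⟩
      have hbR : b ∈ R := hDR ▸ hb
      exact hf b hbR k (le_trans (Finset.le_sup (Finset.mem_univ b)) hk) a
    · -- uniqueness
      rintro D' ⟨x', rfl⟩ hmax'
      obtain ⟨n₀, hn₀⟩ := hx₀
      have hx'self : x' ∈ ({y | AccStar acc x' y ∧ AccStar acc y x'} : Set X) :=
        ⟨accStar_refl h0 x', accStar_refl h0 x'⟩
      have hx'x₀ : AccStar acc x' x₀ := ⟨n₀, hn₀ n₀ le_rfl x'⟩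
      have hx₀x' : AccStar acc x₀ x' := hmax' x' hx'self x₀ hx'x₀
      ext y
      constructor
      · rintro ⟨h1, h2⟩
        exact ⟨accStar_trans htrans hx₀x' h1, accStar_trans htrans h2 hx'x₀⟩
      · rintro ⟨h1, h2⟩
        exact ⟨accStar_trans htrans hx'x₀ h1, accStar_trans htrans h2 hx₀x'⟩
  -- Direction C: TopClassRegular → R nonempty, and the witness class equals R-member's class
  have hC : TopClassRegular acc → ∃ x₀ ∈ R, ∀ D : Set X, IsCommClass acc D →
      (∀ x ∈ D, IsMaximalState acc x) → D = R := by
    rintro ⟨D₀, ⟨x₀, rfl⟩, hmax, ⟨n, hreg⟩, huniq⟩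
    have hx₀D : x₀ ∈ ({y | AccStar acc x₀ y ∧ AccStar acc y x₀} : Set X) :=
      ⟨accStar_refl h0 x₀, accStar_refl h0 x₀⟩
    -- every y reaches x₀
    have hreach : ∀ y : X, ∃ m, acc m y x₀ := by
      intro y
      obtain ⟨z, hyz, hzmax⟩ := exists_maximal_reachable h0 htrans y
      have hzclassmax : ∀ w ∈ ({v | AccStar acc z v ∧ AccStar acc v z} : Set X),
          IsMaximalState acc w := by
        rintro w ⟨hw1, hw2⟩ u hwu
        exact accStar_trans htrans (hzmax u (accStar_trans htrans hw1 hwu)) hw1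
      have hzeq := huniq _ ⟨z, rfl⟩ hzclassmax
      have hzD : z ∈ ({y | AccStar acc x₀ y ∧ AccStar acc y x₀} : Set X) := by
        rw [← hzeq]; exact ⟨accStar_refl h0 z, accStar_refl h0 z⟩
      obtain ⟨m, hm⟩ := accStar_trans htrans hyz hzD.2
      exact ⟨m, hm⟩
    choose m hm using hreach
    have hx₀R : x₀ ∈ R := by
      refine ⟨n + Finset.univ.sup m, fun k hk y => ?_⟩
      have hmy : m y ≤ Finset.univ.sup m := Finset.le_sup (Finset.mem_univ y)
      have h2 : acc (k - m y) x₀ x₀ := hreg (k - m y) (by omega) x₀ hx₀D x₀ hx₀D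
      have := htrans (m y) (k - m y) y x₀ x₀ (hm y) h2
      have hkm : m y + (k - m y) = k := by omega
      rwa [hkm] at this
    refine ⟨x₀, hx₀R, fun D hcc hDmax => ?_⟩
    have h1 := huniq D hcc hDmax
    have h2 := huniq R ⟨x₀, hA x₀ hx₀R⟩ (by rw [hA x₀ hx₀R]; exact hAmax x₀ hx₀R)
    rw [h1, ← h2]
  constructor
  · exact ⟨fun h => (hC h).imp (fun _ h' => h'.1), hB⟩
  · intro h D hcc hDmax
    obtain ⟨x₀, -, huniq⟩ := hC h
    exact huniq D hcc hDmax

end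
end

section
/- For an upper transition operator T on a finite set X, the chain is top class regular under the accessibility relation x →ₙ y ⟺ (Tⁿ1_{y})(x) > 0 if and only if the set {x ∈ X : ∃n ∈ ℕ, ∀y ∈ X, (Tⁿ1_{x})(y) > 0} is nonempty (i.e., the 'for all k ≥ n' condition in the definition of maximal regular states can be weakened to a single n). -/
open Finset Filter

theorem top_class_regular_simpler_characterisation {X : Type*} [Fintype X] [Nonempty X]
    [DecidableEq X]
    (T : (X → ℝ) → (X → ℝ)) (hT : IsUpperTransition T) :
    ({x : X | ∃ n : ℕ, ∀ k ≥ n, ∀ y : X, 0 < T^[k] (ind x) y} : Set X)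
      = {x : X | ∃ n : ℕ, ∀ y : X, 0 < T^[n] (ind x) y} ∧
    (({x : X | ∃ n : ℕ, ∀ k ≥ n, ∀ y : X, 0 < T^[k] (ind x) y} : Set X).Nonempty ↔
      ({x : X | ∃ n : ℕ, ∀ y : X, 0 < T^[n] (ind x) y} : Set X).Nonempty) := by
  have step : ∀ h : X → ℝ, (∀ y, 0 < h y) → ∀ y, 0 < T h y := by
    intro h hpos y
    have h1 : finf h ≤ T h y := ((hT y).1 h).1
    have h2 : 0 < finf h := by
      rw [finf, Finset.lt_inf'_iff]
      exact fun z _ => hpos z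
    linarith
  have key : ∀ x : X, (∃ n : ℕ, ∀ y : X, 0 < T^[n] (ind x) y) →
      ∃ n : ℕ, ∀ k ≥ n, ∀ y : X, 0 < T^[k] (ind x) y := by
    intro x ⟨n, hn⟩
    refine ⟨n, fun k hk => ?_⟩
    induction k, hk using Nat.le_induction with
    | base => exact hn
    | succ k _ ih =>
      intro y
      rw [Function.iterate_succ_apply']
      exact step _ ih y
  have hset : ({x : X | ∃ n : ℕ, ∀ k ≥ n, ∀ y : X, 0 < T^[k] (ind x) y} : Set X)
      = {x : X | ∃ n : ℕ, ∀ y : X, 0 < T^[n] (ind x) y} := by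
    ext x
    exact ⟨fun ⟨n, hn⟩ => ⟨n, hn n le_rfl⟩, key x⟩
  exact ⟨hset, by rw [hset]⟩
end

section
/- For a k-out-of-n:F system with all component reliabilities in [r₋, r₊] where 0 ≤ r₋ ≤ r₊ ≤ 1, the upper failure probability after n components equals F̄ₙ = 1 - Σ_{ℓ=0}^{k-1} C(n,ℓ) r₋^{n-ℓ}(1-r₋)^ℓ, i.e., it equals the failure probability of the precise chain with all reliabilities equal to r₋. -/
theorem k_out_of_n_upper_failure_probability (k : ℕ)
    (rl ru : ℝ) (h0 : 0 ≤ rl) (hlu : rl ≤ ru) (h1 : ru ≤ 1)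
    (Tbar : (Fin (k + 1) → ℝ) → (Fin (k + 1) → ℝ))
    (hTbar : ∀ (h : Fin (k + 1) → ℝ) (ℓ : Fin (k + 1)),
      Tbar h ℓ =
        if hl : (ℓ : ℕ) < k then
          rl * h ℓ + (1 - ru) * h ⟨(ℓ : ℕ) + 1, by omega⟩
            + (ru - rl) * max (h ℓ) (h ⟨(ℓ : ℕ) + 1, by omega⟩)
        else h ℓ) :
    ∀ n : ℕ,
      Tbar^[n] (fun z => if (z : ℕ) = k then 1 else 0) 0
        = 1 - ∑ ℓ ∈ Finset.range k, (n.choose ℓ : ℝ) * rl ^ (n - ℓ) * (1 - rl) ^ ℓ := by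
  have hrl1 : rl ≤ 1 := hlu.trans h1
  set S : ℕ → ℕ → ℝ :=
    fun n m => ∑ j ∈ Finset.range m, (n.choose j : ℝ) * rl ^ (n - j) * (1 - rl) ^ j with hS
  -- S 0 (m+1) = 1
  have hS0 : ∀ m : ℕ, S 0 (m + 1) = 1 := by
    intro m
    induction m with
    | zero => simp [hS]
    | succ m ih =>
        have : S 0 (m + 1 + 1) = S 0 (m + 1) +
            ((Nat.choose 0 (m + 1) : ℝ) * rl ^ (0 - (m + 1)) * (1 - rl) ^ (m + 1)) := by
          simp [hS, Finset.sum_range_succ]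
        rw [this, ih]
        simp
  -- recurrence
  have hrec : ∀ n m : ℕ, S (n + 1) (m + 1) = rl * S n (m + 1) + (1 - rl) * S n m := by
    intro n m
    induction m with
    | zero => simp [hS, pow_succ, mul_comm]
    | succ m ih =>
        have e1 : S (n + 1) (m + 1 + 1) = S (n + 1) (m + 1) +
            ((Nat.choose (n+1) (m+1) : ℝ) * rl ^ (n + 1 - (m + 1)) * (1 - rl) ^ (m + 1)) := by
          simp [hS, Finset.sum_range_succ]
        have e2 : S n (m + 1 + 1) = S n (m + 1) +
            ((Nat.choose n (m+1) : ℝ) * rl ^ (n - (m + 1)) * (1 - rl) ^ (m + 1)) := by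
          simp [hS, Finset.sum_range_succ]
        have e3 : S n (m + 1) = S n m +
            ((Nat.choose n m : ℝ) * rl ^ (n - m) * (1 - rl) ^ m) := by
          simp [hS, Finset.sum_range_succ]
        rw [e1, e2, ih]
        nth_rewrite 3 [e3]
        have pascal : (Nat.choose (n+1) (m+1) : ℝ) = Nat.choose n m + Nat.choose n (m+1) := by
          rw [Nat.choose_succ_succ]; push_cast; ring
        rw [pascal]
        have hex : n + 1 - (m + 1) = n - m := by omega
        rw [hex]
        by_cases hmn : m + 1 ≤ n
        · have : n - m = (n - (m+1)) + 1 := by omega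
          rw [this, pow_succ]
          ring
        · have hc : Nat.choose n (m+1) = 0 := Nat.choose_eq_zero_of_lt (by omega)
          rw [hc]
          push_cast
          ring
  -- monotone step
  have hmono : ∀ n m : ℕ, S n m ≤ S n (m + 1) := by
    intro n m
    have e : S n (m + 1) = S n m +
        ((Nat.choose n m : ℝ) * rl ^ (n - m) * (1 - rl) ^ m) := by
      simp [hS, Finset.sum_range_succ]
    rw [e]
    have h1rl : (0:ℝ) ≤ 1 - rl := by linarith
    nlinarith [pow_nonneg h0 (n - m), pow_nonneg h1rl m,
      mul_nonneg (mul_nonneg (Nat.cast_nonneg (n.choose m)) (pow_nonneg h0 (n - m)))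
        (pow_nonneg h1rl m)]
  -- key claim
  have key : ∀ n : ℕ,
      Tbar^[n] (fun z => if (z : ℕ) = k then 1 else 0)
        = fun ℓ : Fin (k + 1) => 1 - S n (k - (ℓ : ℕ)) := by
    intro n
    induction n with
    | zero =>
        funext ℓ
        simp only [Function.iterate_zero, id]
        by_cases hℓ : (ℓ : ℕ) = k
        · simp [hℓ, hS]
        · have hlt : (ℓ : ℕ) < k := by omega
          have : k - (ℓ : ℕ) = (k - (ℓ : ℕ) - 1) + 1 := by omega
          rw [if_neg hℓ, this, hS0]
          norm_num
    | succ n ih =>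
        rw [Function.iterate_succ_apply', ih]
        funext ℓ
        rw [hTbar]
        by_cases hlt : (ℓ : ℕ) < k
        · rw [dif_pos hlt]

          set m : ℕ := k - ((ℓ : ℕ) + 1) with hm
          have hkℓ : k - (ℓ : ℕ) = m + 1 := by omega
          rw [hkℓ]
          have hmax : max (1 - S n (m + 1)) (1 - S n m) = 1 - S n m := by
            have := hmono n m
            exact max_eq_right (by linarith)
          rw [hmax, hrec]
          ring
        · rw [dif_neg hlt]

          have hk : (ℓ : ℕ) = k := by omega
          rw [hk]
          simp [hS]
  intro n
  rw [key n]
  simp [hS]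
end
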